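/- arXiv:math/0310227 — 2 statements merged into one kernel-verified Lean document; each statement's English description precedes it below -/
import Mathlib

section
/- Let (R, m, k) be an F-finite reduced local ring of characteristic p. Then R is strongly F-regular if and only if the splitting prime P(R) is the zero ideal. -/
set_option linter.unusedVariables false

open TensorProduct Filter IsLocalRing

section Defs

variable (R : Type*) [CommRing R] (p : ℕ) [Fact p.Prime] [CharP R p]

/-- `M` with the `R`-action twisted by the `e`-th Frobenius: `r • m = r^{p^e} • m`.
For `M = R` this is the module `R^{(e)} ≅ R^{1/p^e}`. -/
def Twist (R : Type*) (p : ℕ) (M : Type*) (e : ℕ) : Type _ := M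

instance (M : Type*) [AddCommGroup M] (e : ℕ) : AddCommGroup (Twist R p M e) :=
  inferInstanceAs (AddCommGroup M)

instance (M : Type*) [AddCommGroup M] [Module R M] (e : ℕ) : Module R (Twist R p M e) where
  smul r m := (r ^ p ^ e • (show M from m) : M)
  one_smul m := by
    change (1 : R) ^ p ^ e • (show M from m) = (show M from m)
    rw [one_pow, one_smul]
  mul_smul a b m := by
    change (a * b) ^ p ^ e • (show M from m) =
      a ^ p ^ e • (b ^ p ^ e • (show M from m))
    rw [mul_pow, mul_smul]
  smul_zero r := by
    change r ^ p ^ e • (0 : M) = (0 : M); simp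
  smul_add r x y := by
    change r ^ p ^ e • ((show M from x) + (show M from y)) =
      r ^ p ^ e • (show M from x) + r ^ p ^ e • (show M from y)
    rw [smul_add]
  add_smul a b m := by
    change (a + b) ^ p ^ e • (show M from m) =
      a ^ p ^ e • (show M from m) + b ^ p ^ e • (show M from m)
    rw [add_pow_char_pow, add_smul]
  zero_smul m := by
    change (0 : R) ^ p ^ e • (show M from m) = (0 : M)
    rw [zero_pow (pow_ne_zero e (Fact.out : p.Prime).ne_zero), zero_smul]

/-- The identity map `M → Twist R p M e`. -/
def toTwist (R : Type*) (p : ℕ) {M : Type*} (m : M) (e : ℕ) : Twist R p M e := m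

/-- The map `φ_{c,e} : R → R^{1/p^e}`, `1 ↦ c^{1/p^e}`, splits over `R`. -/
def SplitsFrob (c : R) (e : ℕ) : Prop :=
  ∃ ψ : Twist R p R e →ₗ[R] R, ψ (toTwist R p c e) = 1

/-- The splitting prime `𝒫(R)`. -/
def SplittingPrimeSet : Set R := { c | ∀ᶠ e in atTop, ¬ SplitsFrob R p c e }

/-- `R` is `F`-pure: `R → R^{1/p}` splits. -/
def IsFPure : Prop := SplitsFrob R p 1 1

/-- `R` is `F`-finite: `R^{1/p}` is a finite `R`-module. -/
def IsFFinite : Prop := Module.Finite R (Twist R p R 1)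

/-- `R` is strongly `F`-regular. -/
def StronglyFRegular : Prop :=
  ∀ c : R, (∀ Q ∈ minimalPrimes R, c ∉ Q) → ∃ e, SplitsFrob R p c e

/-- `n` is the maximal rank of a free direct summand of `M`:
`M ≅ R^n ⊕ N` with `N` having no nonzero free direct summand. -/
def MaxFreeRank (M : Type*) [AddCommGroup M] [Module R M] (n : ℕ) : Prop :=
  ∃ (N : Submodule R M) (_ : M ≃ₗ[R] ((Fin n → R) × N)),
    ¬ ∃ g : N →ₗ[R] R, Function.Surjective g

end Defs

section Hull

variable (R : Type*) [CommRing R] [IsLocalRing R]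

/-- `E` is an injective hull of the residue field, with socle generator `u`. -/
def IsInjHullSocle (E : Type*) [AddCommGroup E] [Module R E] (u : E) : Prop :=
  Module.Injective R E ∧ u ≠ 0 ∧ (∀ r ∈ maximalIdeal R, r • u = 0) ∧
    (∀ x : E, (∀ r ∈ maximalIdeal R, r • x = 0) → x ∈ Submodule.span R {u}) ∧
    ∀ N : Submodule R E, N ≠ ⊥ → u ∈ N

end Hull

section Ae

variable (R : Type*) [CommRing R] (p : ℕ) [Fact p.Prime] [CharP R p]

/-- The ideal `A_e = {r ∈ R : r ⊗ u = 0 in R^{(e)} ⊗_R E}`. -/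
def AeSet (E : Type*) [AddCommGroup E] [Module R E] (u : E) (e : ℕ) : Set R :=
  { r | (toTwist R p r e ⊗ₜ[R] u : Twist R p R e ⊗[R] E) = 0 }

end Ae

/-- The length of a module, as the Krull dimension of its lattice of submodules. -/
noncomputable def moduleLength (R M : Type*) [CommRing R] [AddCommGroup M] [Module R M] :
    WithBot ℕ∞ := Order.krullDim (Submodule R M)

/-- A regular local ring: the maximal ideal is generated by `dim R` elements. -/
def IsRegularLocal (R : Type*) [CommRing R] [IsLocalRing R] : Prop :=
  IsNoetherianRing R ∧ ∃ s : Finset R,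
    Ideal.span (s : Set R) = maximalIdeal R ∧ (s.card : WithBot ℕ∞) = ringKrullDim R

set_option linter.unusedSectionVars false

section Aux
variable {R : Type*} [CommRing R] {p : ℕ} [Fact p.Prime] [CharP R p]

lemma toTwist_add (x y : R) (e : ℕ) :
    toTwist R p (x + y) e = toTwist R p x e + toTwist R p y e := rfl

lemma toTwist_zero (e : ℕ) : toTwist R p (0:R) e = 0 := rfl

lemma toTwist_smul (r x : R) (e : ℕ) :
    r • toTwist R p x e = toTwist R p (r ^ p ^ e * x) e := rfl

def twistMulMap (d : R) (e : ℕ) : Twist R p R e →ₗ[R] Twist R p R e where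
  toFun x := toTwist R p (d * (show R from x)) e
  map_add' x y := by
    show toTwist R p (d * ((show R from x) + (show R from y))) e = _
    rw [mul_add, toTwist_add]
  map_smul' r x := by
    show toTwist R p (d * (r ^ p ^ e * (show R from x))) e
        = r • toTwist R p (d * (show R from x)) e
    rw [toTwist_smul, mul_left_comm]

lemma splits_of_splits_mul {c d : R} {e : ℕ} (h : SplitsFrob R p (c * d) e) :
    SplitsFrob R p c e := by
  obtain ⟨ψ, hψ⟩ := h
  refine ⟨ψ.comp (twistMulMap d e), ?_⟩
  have h2 : twistMulMap d e (toTwist R p c e) = toTwist R p (c * d) e := by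
    show toTwist R p (d * c) e = toTwist R p (c * d) e
    rw [mul_comm]
  show ψ (twistMulMap d e (toTwist R p c e)) = 1
  rw [h2, hψ]

def twistLower (e e' : ℕ) (θ : Twist R p R e' →ₗ[R] R) :
    Twist R p R (e + e') →ₗ[R] Twist R p R e where
  toFun x := toTwist R p (θ (toTwist R p (show R from x) e')) e
  map_add' x y := by
    show toTwist R p (θ (toTwist R p ((show R from x) + (show R from y)) e')) e = _
    rw [toTwist_add, map_add]; rfl
  map_smul' r x := by
    show toTwist R p (θ (toTwist R p (r ^ p ^ (e + e') * (show R from x)) e')) e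
        = r • toTwist R p (θ (toTwist R p (show R from x) e')) e
    have h1 : r ^ p ^ (e + e') * (show R from x) = (r ^ p ^ e) ^ p ^ e' * (show R from x) := by
      rw [← pow_mul, pow_add]
    rw [h1, ← toTwist_smul, map_smul, smul_eq_mul, toTwist_smul]

lemma SplitsFrob.comp {c d : R} {e e' : ℕ} (h : SplitsFrob R p c e) (h' : SplitsFrob R p d e') :
    SplitsFrob R p (c ^ p ^ e' * d) (e + e') := by
  obtain ⟨ψ, hψ⟩ := h; obtain ⟨θ, hθ⟩ := h'
  refine ⟨ψ.comp (twistLower e e' θ), ?_⟩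
  have h2 : twistLower e e' θ (toTwist R p (c ^ p ^ e' * d) (e + e')) = toTwist R p c e := by
    show toTwist R p (θ (toTwist R p (c ^ p ^ e' * d) e')) e = toTwist R p c e
    rw [← toTwist_smul, map_smul, smul_eq_mul, hθ, mul_one]
  show ψ (twistLower e e' θ (toTwist R p (c ^ p ^ e' * d) (e + e'))) = 1
  rw [h2, hψ]

lemma splits_one_of_splits {c : R} {e : ℕ} (h : SplitsFrob R p c e) : SplitsFrob R p 1 e := by
  have : SplitsFrob R p (1 * c) e := by rwa [one_mul]
  exact splits_of_splits_mul this

def frobPow (k : ℕ) : Twist R p R 1 →ₗ[R] Twist R p R (k + 1) where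
  toFun x := toTwist R p ((show R from x) ^ p ^ k) (k + 1)
  map_add' x y := by
    show toTwist R p (((show R from x) + (show R from y)) ^ p ^ k) (k + 1) = _
    rw [add_pow_char_pow, toTwist_add]
  map_smul' r x := by
    show toTwist R p ((r ^ p ^ 1 * (show R from x)) ^ p ^ k) (k + 1)
        = r • toTwist R p ((show R from x) ^ p ^ k) (k + 1)
    rw [toTwist_smul, mul_pow, ← pow_mul, pow_one, ← pow_succ']

lemma splits_one_one_of_splits_one {k : ℕ} (h : SplitsFrob R p 1 (k + 1)) :
    SplitsFrob R p 1 1 := by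
  obtain ⟨ψ, hψ⟩ := h
  refine ⟨ψ.comp (frobPow k), ?_⟩
  have h2 : frobPow k (toTwist R p (1:R) 1) = toTwist R p (1:R) (k+1) := by
    show toTwist R p ((1:R) ^ p ^ k) (k + 1) = toTwist R p (1:R) (k+1)
    rw [one_pow]
  show ψ (frobPow k (toTwist R p (1:R) 1)) = 1
  rw [h2, hψ]

lemma isUnit_of_splits_zero {c : R} (h : SplitsFrob R p c 0) : IsUnit c := by
  obtain ⟨ψ, hψ⟩ := h
  have h2 : toTwist R p c 0 = c • toTwist R p (1:R) 0 := by
    rw [toTwist_smul, pow_zero, pow_one, mul_one]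
  rw [h2, map_smul, smul_eq_mul] at hψ
  exact isUnit_iff_exists_inv.mpr ⟨_, hψ⟩

lemma splits_of_isUnit_apply {c : R} {e : ℕ} (ψ : Twist R p R e →ₗ[R] R)
    (h : IsUnit (ψ (toTwist R p c e))) : SplitsFrob R p c e := by
  refine ⟨(h.unit⁻¹ : Rˣ) • ψ, ?_⟩
  rw [LinearMap.smul_apply, Units.smul_def, smul_eq_mul]
  exact h.val_inv_mul

lemma splits_succ (hFP : SplitsFrob R p 1 1) {c : R} {e : ℕ} (h : SplitsFrob R p c e) :
    SplitsFrob R p c (e + 1) := by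
  have h2 := h.comp hFP
  rw [pow_one, mul_one] at h2
  have h3 : c ^ p = c * c ^ (p - 1) := by
    conv_lhs => rw [← Nat.succ_pred_eq_of_pos (Fact.out : p.Prime).pos]
    rw [pow_succ', Nat.pred_eq_sub_one]
  rw [h3] at h2
  exact splits_of_splits_mul h2
end Aux

section Ring
variable {R : Type*} [CommRing R] [IsNoetherianRing R] [IsLocalRing R] [IsReduced R]
variable {p : ℕ} [Fact p.Prime] [CharP R p]

lemma eq_zero_of_mem_all_minimalPrimes {x : R} (h : ∀ Q ∈ minimalPrimes R, x ∈ Q) : x = 0 := by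
  have hx : x ∈ nilradical R := by
    rw [nilradical_eq_sInf]
    rw [Ideal.mem_sInf]
    intro J hJ
    haveI : J.IsPrime := hJ
    obtain ⟨Q, hQ, hQJ⟩ := Ideal.exists_minimalPrimes_le (bot_le : (⊥ : Ideal R) ≤ J)
    exact hQJ (h Q hQ)
  rw [nilradical_eq_zero R] at hx
  simpa using hx

lemma exists_partner {c : R} (hc : c ≠ 0) :
    ∃ b : R, c * b = 0 ∧ ∀ Q ∈ minimalPrimes R, c + b ∉ Q := by
  have hfin : (minimalPrimes R).Finite := minimalPrimes.finite_of_isNoetherianRing R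
  have hSfin : {Q ∈ minimalPrimes R | c ∉ Q}.Finite := hfin.subset fun Q hQ => hQ.1
  have hTfin : {Q ∈ minimalPrimes R | c ∈ Q}.Finite := hfin.subset fun Q hQ => hQ.1
  set Sf := hSfin.toFinset with hSf
  set Tf := hTfin.toFinset with hTf
  set I : Ideal R := Sf.inf id with hI
  have hnotle : ∀ Q ∈ Tf, ¬ I ≤ Q := by
    intro Q hQ hle
    replace hQ := hTfin.mem_toFinset.mp hQ
    have hQp : Q.IsPrime := hQ.1.1.1
    rw [Ideal.IsPrime.inf_le' hQp] at hle
    obtain ⟨P, hP, hPQ⟩ := hle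
    replace hP := hSfin.mem_toFinset.mp hP
    have hQP : Q ≤ P := hQ.1.2 ⟨hP.1.1.1, bot_le⟩ hPQ
    exact hP.2 (hQP hQ.2)
  have havoid := Ideal.subset_union_prime (s := Tf) (f := id) (I := I) ⊥ ⊥
    (fun Q hQ _ _ => ((hTfin.mem_toFinset.mp hQ).1.1.1))
  have hnotsub : ¬ ((I : Set R) ⊆ ⋃ Q ∈ (Tf : Set (Ideal R)), ((id Q : Ideal R) : Set R)) := by
    rw [havoid]
    rintro ⟨Q, hQ, hle⟩
    exact hnotle Q hQ hle
  obtain ⟨b, hbI, hbU⟩ := Set.not_subset.mp hnotsub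
  have hbT : ∀ Q ∈ minimalPrimes R, c ∈ Q → b ∉ Q := by
    intro Q hQ hcQ hbQ
    apply hbU
    refine Set.mem_biUnion ?_ (show b ∈ ((id Q : Ideal R) : Set R) from hbQ)
    exact Finset.mem_coe.mpr (hTfin.mem_toFinset.mpr ⟨hQ, hcQ⟩)
  have hbS : ∀ Q ∈ minimalPrimes R, c ∉ Q → b ∈ Q := by
    intro Q hQ hcQ
    have hle : I ≤ id Q := Finset.inf_le (hSfin.mem_toFinset.mpr ⟨hQ, hcQ⟩)
    exact hle hbI
  refine ⟨b, ?_, ?_⟩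
  · apply eq_zero_of_mem_all_minimalPrimes
    intro Q hQ
    by_cases hcQ : c ∈ Q
    · exact Ideal.mul_mem_right b Q hcQ
    · exact Ideal.mul_mem_left Q c (hbS Q hQ hcQ)
  · intro Q hQ hmem
    by_cases hcQ : c ∈ Q
    · have hbQ : b ∈ Q := by
        have := Q.sub_mem hmem hcQ
        simpa using this
      exact hbT Q hQ hcQ hbQ
    · have hbQ : b ∈ Q := hbS Q hQ hcQ
      have : c ∈ Q := by
        have := Q.sub_mem hmem hbQ
        simpa using this
      exact hcQ this

lemma key_splits (hSFR : StronglyFRegular R p) {c : R} (hc : c ≠ 0) :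
    ∃ e, SplitsFrob R p c e := by
  obtain ⟨b, hb0, hbT⟩ := exists_partner hc
  obtain ⟨e, ψ, hψ⟩ := hSFR (c + b) hbT
  have hsum : ψ (toTwist R p c e) + ψ (toTwist R p b e) = 1 := by
    rw [← map_add, ← toTwist_add, hψ]
  rcases isUnit_or_isUnit_of_add_one hsum with h | h
  · exact ⟨e, splits_of_isUnit_apply ψ h⟩
  · exfalso
    obtain ⟨ψ', hψ'⟩ := splits_of_isUnit_apply ψ h
    have hq : p ^ e ≠ 0 := pow_ne_zero _ (Fact.out : p.Prime).ne_zero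
    obtain ⟨k, hk⟩ := Nat.exists_eq_succ_of_ne_zero hq
    have hcb : c ^ p ^ e * b = 0 := by
      rw [hk, pow_succ, mul_assoc, hb0, mul_zero]
    have : c = 0 := by
      calc c = c * 1 := (mul_one c).symm
        _ = c * ψ' (toTwist R p b e) := by rw [hψ']
        _ = ψ' (c • toTwist R p b e) := by rw [map_smul, smul_eq_mul]
        _ = ψ' (toTwist R p (c ^ p ^ e * b) e) := by rw [toTwist_smul]
        _ = 0 := by rw [hcb, toTwist_zero, map_zero]
    exact hc this

lemma fpure (hSFR : StronglyFRegular R p) : SplitsFrob R p 1 1 := by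
  by_cases hfield : IsField R
  · letI := hfield.toField
    have hv : toTwist R p (1:R) 1 ≠ 0 := by
      show (1 : R) ≠ 0
      exact one_ne_zero
    let b := Module.Basis.ofVectorSpace R (Twist R p R 1)
    have hrepr : b.repr (toTwist R p (1:R) 1) ≠ 0 := by
      simpa using (LinearEquiv.map_ne_zero_iff b.repr).mpr hv
    obtain ⟨i, hi⟩ := Finsupp.ne_iff.mp hrepr
    refine splits_of_isUnit_apply (b.coord i) ?_
    rw [Module.Basis.coord_apply]
    exact isUnit_iff_ne_zero.mpr (by simpa using hi)
  · have hm : maximalIdeal R ≠ ⊥ := fun h => hfield (isField_iff_maximalIdeal_eq.mpr h)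
    obtain ⟨c, hcm, hc0⟩ := Submodule.ne_bot_iff _ |>.mp hm
    obtain ⟨e, he⟩ := key_splits hSFR hc0
    match e, he with
    | 0, he =>
      exact absurd (isUnit_of_splits_zero he)
        (mem_nonunits_iff.mp ((mem_maximalIdeal c).mp hcm))
    | (k+1), he =>
      exact splits_one_one_of_splits_one (splits_one_of_splits he)
end Ring

/-- An F-finite reduced local ring `R` of characteristic `p` is strongly
F-regular iff its splitting prime is the zero ideal. -/
theorem stronglyFRegular_iff_splittingPrime_eq_bot
    (R : Type*) [CommRing R] [IsNoetherianRing R] [IsLocalRing R] [IsReduced R]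
    (p : ℕ) [Fact p.Prime] [CharP R p] (hFF : IsFFinite R p) :
    StronglyFRegular R p ↔ SplittingPrimeSet R p = {0} := by
  constructor
  · intro hSFR
    ext c
    simp only [SplittingPrimeSet, Set.mem_setOf_eq, Set.mem_singleton_iff]
    constructor
    · intro hev
      by_contra hc
      obtain ⟨e, he⟩ := key_splits hSFR hc
      have hFP := fpure hSFR
      have hall : ∀ k, SplitsFrob R p c (e + k) := by
        intro k
        induction k with
        | zero => exact he
        | succ n ih => exact splits_succ hFP ih
      rw [Filter.eventually_atTop] at hev
      obtain ⟨N, hN⟩ := hev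
      exact hN (e + N) (Nat.le_add_left N e) (hall N)
    · rintro rfl
      refine Filter.Eventually.of_forall (fun e => ?_)
      rintro ⟨ψ, hψ⟩
      rw [toTwist_zero, map_zero] at hψ
      exact zero_ne_one hψ
  · intro hset c hcQ
    have hc0 : c ≠ 0 := by
      rintro rfl
      obtain ⟨Q, hQ, -⟩ :=
        Ideal.exists_minimalPrimes_le (bot_le : (⊥ : Ideal R) ≤ maximalIdeal R)
      exact hcQ Q hQ Q.zero_mem
    have hmem : c ∉ SplittingPrimeSet R p := by
      rw [hset]
      simpa using hc0
    rw [SplittingPrimeSet, Set.mem_setOf_eq, Filter.not_eventually] at hmem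
    obtain ⟨e, he⟩ := hmem.exists
    exact ⟨e, not_not.mp he⟩
end

section
/- Let (R, m, k) be an F-finite reduced F-pure local ring of characteristic p with splitting prime P. Then for every prime ideal Q of R containing P, the splitting prime of the localization R_Q equals P R_Q, i.e. P(R_Q) = P(R) R_Q. -/
set_option linter.unusedVariables false

open TensorProduct Filter IsLocalRing

section Helpers

variable {S : Type*} [CommRing S] {p : ℕ} [Fact p.Prime] [CharP S p]

lemma twist_smul_def (e : ℕ) (r x : S) :
    (r • (toTwist S p x e) : Twist S p S e) = toTwist S p (r ^ p ^ e * x) e := rfl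

lemma twistHom_mul_pow {e : ℕ} (ψ : Twist S p S e →ₗ[S] S) (r m : S) :
    ψ (toTwist S p (r ^ p ^ e * m) e) = r * ψ (toTwist S p m e) :=
  ψ.map_smul r (toTwist S p m e)

lemma twistHom_add {e : ℕ} (ψ : Twist S p S e →ₗ[S] S) (a b : S) :
    ψ (toTwist S p (a + b) e) = ψ (toTwist S p a e) + ψ (toTwist S p b e) :=
  ψ.map_add (toTwist S p a e) (toTwist S p b e)

/-- Build a `p^{-e}`-linear map from a raw function. -/
def mkTwistHom (e : ℕ) (F : S → S) (h1 : ∀ a b, F (a + b) = F a + F b)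
    (h2 : ∀ r m, F (r ^ p ^ e * m) = r * F m) : Twist S p S e →ₗ[S] S where
  toFun m := F (show S from m)
  map_add' a b := h1 _ _
  map_smul' r m := h2 r _

@[simp] lemma mkTwistHom_apply (e : ℕ) (F : S → S) (h1) (h2) (m : S) :
    mkTwistHom e F h1 h2 (toTwist S p m e) = F m := rfl

end Helpers
section Helpers2

variable {S : Type*} [CommRing S] {p : ℕ} [Fact p.Prime] [CharP S p]

lemma splitsFrob_succ (hp : IsFPure S p) {c : S} {e : ℕ} (h : SplitsFrob S p c e) :
    SplitsFrob S p c (e + 1) := by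
  obtain ⟨ψ, hψ⟩ := h
  obtain ⟨ψ1, hψ1⟩ := hp
  refine ⟨mkTwistHom (e + 1) (fun m => ψ1 (toTwist S p (ψ (toTwist S p m e)) 1)) ?_ ?_, ?_⟩
  · intro a b
    show ψ1 (toTwist S p (ψ (toTwist S p (a + b) e)) 1) = _ + _
    rw [twistHom_add ψ, twistHom_add ψ1]
  · intro r m
    show ψ1 (toTwist S p (ψ (toTwist S p (r ^ p ^ (e + 1) * m) e)) 1)
      = r * ψ1 (toTwist S p (ψ (toTwist S p m e)) 1)
    have h1 : r ^ p ^ (e + 1) * m = (r ^ p) ^ p ^ e * m := by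
      rw [← pow_mul, ← pow_succ']
    rw [h1, twistHom_mul_pow]
    have h2 : r ^ p * ψ (toTwist S p m e) = r ^ p ^ 1 * ψ (toTwist S p m e) := by
      rw [pow_one]
    rw [h2, twistHom_mul_pow]
  · rw [mkTwistHom_apply, hψ, hψ1]

lemma splitsFrob_mono (hp : IsFPure S p) {c : S} {e e' : ℕ} (h : SplitsFrob S p c e)
    (hee : e ≤ e') : SplitsFrob S p c e' := by
  induction e' with
  | zero => exact Nat.le_zero.mp hee ▸ h
  | succ n ih =>
    rcases Nat.lt_or_ge e (n + 1) with h' | h'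
    · exact splitsFrob_succ hp (ih (Nat.lt_succ_iff.mp h'))
    · exact le_antisymm hee h' ▸ h

lemma not_mem_splittingPrimeSet_iff (hp : IsFPure S p) (c : S) :
    c ∉ SplittingPrimeSet S p ↔ ∃ e, SplitsFrob S p c e := by
  constructor
  · intro h
    have : ∃ᶠ e in Filter.atTop, ¬ ¬ SplitsFrob S p c e := Filter.not_eventually.mp h
    obtain ⟨e, he⟩ := this.exists
    exact ⟨e, not_not.mp he⟩
  · rintro ⟨e, he⟩ hmem
    obtain ⟨e', hne⟩ := Filter.eventually_atTop.mp hmem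
    exact (hne (max e' e) (le_max_left _ _)) (splitsFrob_mono hp he (le_max_right _ _))

lemma splittingPrime_compatible (hp : IsFPure S p) {c : S} (hc : c ∈ SplittingPrimeSet S p)
    (e : ℕ) (φ : Twist S p S e →ₗ[S] S) :
    φ (toTwist S p c e) ∈ SplittingPrimeSet S p := by
  by_contra h
  obtain ⟨e', ψ, hψ⟩ := (not_mem_splittingPrimeSet_iff hp _).mp h
  have hsplit : SplitsFrob S p c (e + e') := by
    refine ⟨mkTwistHom (e + e') (fun m => ψ (toTwist S p (φ (toTwist S p m e)) e')) ?_ ?_, ?_⟩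
    · intro a b
      show ψ (toTwist S p (φ (toTwist S p (a + b) e)) e') = _ + _
      rw [twistHom_add φ, twistHom_add ψ]
    · intro r m
      show ψ (toTwist S p (φ (toTwist S p (r ^ p ^ (e + e') * m) e)) e')
        = r * ψ (toTwist S p (φ (toTwist S p m e)) e')
      have h1 : r ^ p ^ (e + e') * m = (r ^ p ^ e') ^ p ^ e * m := by
        rw [← pow_mul, ← pow_add, Nat.add_comm e' e]
      rw [h1, twistHom_mul_pow, twistHom_mul_pow]
    · rw [mkTwistHom_apply, hψ]
  exact (not_mem_splittingPrimeSet_iff hp c).mpr ⟨_, hsplit⟩ hc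

/-- The splitting prime set as an ideal. -/
def splittingIdeal (S : Type*) [CommRing S] (p : ℕ) [Fact p.Prime] [CharP S p]
    [IsLocalRing S] : Ideal S where
  carrier := SplittingPrimeSet S p
  zero_mem' := by
    refine Filter.Eventually.of_forall fun e => ?_
    rintro ⟨ψ, hψ⟩
    have : ψ (toTwist S p (0 : S) e) = 0 := ψ.map_zero
    rw [hψ] at this
    exact one_ne_zero this
  add_mem' := by
    intro a b ha hb
    refine (ha.and hb).mono fun e ⟨h1, h2⟩ => ?_
    rintro ⟨ψ, hψ⟩
    have hadd : ψ (toTwist S p a e) + ψ (toTwist S p b e) = 1 := by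
      rw [← twistHom_add, hψ]
    rcases IsLocalRing.isUnit_or_isUnit_of_add_one hadd with hu | hu
    · exact h1 ⟨(↑hu.unit⁻¹ : S) • ψ, hu.val_inv_mul⟩
    · exact h2 ⟨(↑hu.unit⁻¹ : S) • ψ, hu.val_inv_mul⟩
  smul_mem' := by
    intro r a ha
    refine ha.mono fun e h1 => ?_
    rintro ⟨ψ, hψ⟩
    refine h1 ⟨mkTwistHom e (fun m => ψ (toTwist S p (r * m) e)) ?_ ?_, ?_⟩
    · intro x y
      show ψ (toTwist S p (r * (x + y)) e) = _ + _
      rw [mul_add, twistHom_add]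
    · intro s m
      show ψ (toTwist S p (r * (s ^ p ^ e * m)) e) = s * ψ (toTwist S p (r * m) e)
      rw [show r * (s ^ p ^ e * m) = s ^ p ^ e * (r * m) by ring, twistHom_mul_pow]
    · rw [mkTwistHom_apply]; exact hψ

lemma coe_splittingIdeal (S : Type*) [CommRing S] (p : ℕ) [Fact p.Prime] [CharP S p]
    [IsLocalRing S] : (splittingIdeal S p : Set S) = SplittingPrimeSet S p := rfl

end Helpers2
section Finiteness

variable {R : Type*} [CommRing R] {p : ℕ} [Fact p.Prime] [CharP R p]

/-- Auxiliary: `R` is generated by finitely many elements as `p^{-e}`-twisted module. -/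
def FGtw (R : Type*) [CommRing R] (p e : ℕ) : Prop :=
  ∃ (ι : Type) (_ : Fintype ι) (v : ι → R),
    ∀ m : R, ∃ c : ι → R, m = ∑ i, c i ^ p ^ e * v i

lemma fgtw_of_finite (e : ℕ) (h : Module.Finite R (Twist R p R e)) : FGtw R p e := by
  obtain ⟨n, s, hs⟩ := Module.Finite.exists_fin (R := R) (M := Twist R p R e)
  refine ⟨Fin n, inferInstance, fun i => (show R from s i), fun m => ?_⟩
  have hm : (toTwist R p m e) ∈ Submodule.span R (Set.range s) := hs ▸ Submodule.mem_top
  obtain ⟨c, hc⟩ := (Submodule.mem_span_range_iff_exists_fun _).mp hm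
  exact ⟨c, hc.symm⟩

lemma finite_of_fgtw (e : ℕ) (h : FGtw R p e) : Module.Finite R (Twist R p R e) := by
  classical
  obtain ⟨ι, hι, v, hv⟩ := h
  have htop : Submodule.span R (Set.range (fun i => toTwist R p (v i) e)) = ⊤ := by
    rw [Submodule.eq_top_iff']
    intro m
    obtain ⟨c, hc⟩ := hv (show R from m)
    exact (Submodule.mem_span_range_iff_exists_fun _).mpr ⟨c, hc.symm⟩
  exact ⟨⟨Finset.univ.image (fun i => toTwist R p (v i) e), by
    rw [Finset.coe_image, Finset.coe_univ, Set.image_univ]; exact htop⟩⟩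

omit [Fact p.Prime] [CharP R p] in
lemma fgtw_zero : FGtw R p 0 :=
  ⟨PUnit, inferInstance, fun _ => 1, fun m => ⟨fun _ => m, by simp⟩⟩

lemma fgtw_succ {e : ℕ} (h1 : FGtw R p 1) (he : FGtw R p e) : FGtw R p (e + 1) := by
  haveI : ExpChar R p := ExpChar.prime Fact.out
  obtain ⟨κ, hκ, w, hw⟩ := h1
  obtain ⟨ι, hι, v, hv⟩ := he
  refine ⟨κ × ι, inferInstance, fun jk => v jk.2 ^ p * w jk.1, fun m => ?_⟩
  obtain ⟨c, hc⟩ := hw m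
  choose d hd using fun j => hv (c j)
  refine ⟨fun jk => d jk.1 jk.2, ?_⟩
  calc m = ∑ j, c j ^ p ^ 1 * w j := hc
    _ = ∑ j, (∑ i, d j i ^ p ^ e * v i) ^ p * w j := by
        refine Finset.sum_congr rfl fun j _ => ?_
        rw [← hd j, pow_one]
    _ = ∑ j, (∑ i, (d j i ^ p ^ e * v i) ^ p) * w j := by
        refine Finset.sum_congr rfl fun j _ => ?_
        rw [sum_pow_char]
    _ = ∑ j, ∑ i, d j i ^ p ^ (e + 1) * (v i ^ p * w j) := by
        refine Finset.sum_congr rfl fun j _ => ?_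
        rw [Finset.sum_mul]
        refine Finset.sum_congr rfl fun i _ => ?_
        rw [mul_pow, ← pow_mul, ← pow_succ]
        ring
    _ = ∑ jk : κ × ι, d jk.1 jk.2 ^ p ^ (e + 1) * (v jk.2 ^ p * w jk.1) := by
        rw [Fintype.sum_prod_type]

lemma finite_twist (hFF : Module.Finite R (Twist R p R 1)) (e : ℕ) :
    Module.Finite R (Twist R p R e) := by
  induction e with
  | zero => exact finite_of_fgtw 0 fgtw_zero
  | succ n ih =>
    exact finite_of_fgtw _ (fgtw_succ (fgtw_of_finite 1 hFF) (fgtw_of_finite n ih))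

end Finiteness
set_option linter.unusedSectionVars false
section Loc

variable {R : Type*} [CommRing R] {p : ℕ} [Fact p.Prime] [CharP R p]
variable (Q : Ideal R) [Q.IsPrime] [CharP (Localization.AtPrime Q) p]

local notation "L" => Localization.AtPrime Q
local notation "f" => algebraMap R (Localization.AtPrime Q)

noncomputable instance twistLocModule (e : ℕ) : Module R (Twist L p L e) :=
  Module.compHom _ (f : R →+* L)

lemma twistLoc_smul_def (e : ℕ) (r : R) (x : L) :
    (r • (toTwist L p x e) : Twist L p L e) = toTwist L p ((f r) ^ p ^ e * x) e := rfl

instance twistLocTower (e : ℕ) : IsScalarTower R L (Twist L p L e) := by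
  constructor
  intro r l x
  show ((r • l) ^ p ^ e * (show L from x) : L) = (f r) ^ p ^ e * (l ^ p ^ e * (show L from x))
  rw [Algebra.smul_def, mul_pow, mul_assoc]

/-- The canonical map `R^{1/q} → (R_Q)^{1/q}`. -/
noncomputable def gTwist (e : ℕ) : Twist R p R e →ₗ[R] Twist L p L e where
  toFun m := toTwist L p (f (show R from m)) e
  map_add' a b := by
    show toTwist L p (f ((show R from a) + (show R from b))) e = _
    rw [map_add]; rfl
  map_smul' r m := by
    show toTwist L p (f (r ^ p ^ e * (show R from m))) e
      = toTwist L p ((f r) ^ p ^ e * f (show R from m)) e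
    rw [map_mul, map_pow]

lemma gTwist_apply (e : ℕ) (m : R) :
    gTwist Q e (toTwist R p m e) = toTwist L p (f m) e := rfl

instance isLocalizedModule_gTwist (e : ℕ) :
    IsLocalizedModule Q.primeCompl (gTwist (p := p) Q e) := by
  constructor
  · intro s
    rw [Module.End.isUnit_iff]
    have hu : IsUnit ((f s) ^ p ^ e) := (IsLocalization.map_units L s).pow _
    constructor
    · intro x y hxy
      have : (f s) ^ p ^ e * (show L from x) = (f s) ^ p ^ e * (show L from y) := hxy
      exact hu.mul_left_cancel this
    · intro x
      refine ⟨toTwist L p ((↑hu.unit⁻¹ : L) * (show L from x)) e, ?_⟩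
      show ((f s) ^ p ^ e * ((↑hu.unit⁻¹ : L) * (show L from x)) : L) = (show L from x)
      rw [← mul_assoc, hu.mul_val_inv, one_mul]
  · intro y
    obtain ⟨⟨r, s⟩, hrs⟩ := IsLocalization.surj (M := Q.primeCompl) (show L from y)
    refine ⟨⟨toTwist R p ((s : R) ^ (p ^ e - 1) * r) e, s⟩, ?_⟩
    show ((f s) ^ p ^ e * (show L from y) : L) = f ((s : R) ^ (p ^ e - 1) * r)
    have hq : (f (s : R)) ^ p ^ e = (f (s : R)) ^ (p ^ e - 1) * f (s : R) := by
      rw [← pow_succ, Nat.sub_add_cancel (Nat.one_le_iff_ne_zero.mpr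
        (pow_ne_zero e (Fact.out : p.Prime).ne_zero))]
    rw [hq, map_mul, map_pow, mul_assoc, mul_comm (f (s : R)) _, hrs]
  · intro m m' hmm
    have h1 : f (show R from m) = f (show R from m') := congrArg (fun z => (show L from z)) hmm
    obtain ⟨t, ht⟩ := (IsLocalization.eq_iff_exists Q.primeCompl L).mp h1
    refine ⟨t, ?_⟩
    show ((t : R) ^ p ^ e * (show R from m) : R) = (t : R) ^ p ^ e * (show R from m')
    have hq : (t : R) ^ p ^ e = (t : R) ^ (p ^ e - 1) * (t : R) := by
      rw [← pow_succ, Nat.sub_add_cancel (Nat.one_le_iff_ne_zero.mpr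
        (pow_ne_zero e (Fact.out : p.Prime).ne_zero))]
    rw [hq, mul_assoc, mul_assoc, ht]

/-- Localization of a `p^{-e}`-linear map. -/
noncomputable def locHom (e : ℕ) :
    (Twist R p R e →ₗ[R] R) →ₗ[R] (Twist L p L e →ₗ[L] L) :=
  IsLocalizedModule.mapExtendScalars Q.primeCompl (gTwist (p := p) Q e)
    (Algebra.linearMap R L) L

lemma locHom_apply (e : ℕ) (φ : Twist R p R e →ₗ[R] R) (m : R) :
    locHom Q e φ (toTwist L p (f m) e) = f (φ (toTwist R p m e)) :=
  IsLocalizedModule.map_apply Q.primeCompl (gTwist (p := p) Q e)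
    (Algebra.linearMap R L) φ (toTwist R p m e)

lemma isFPure_localization (hpure : IsFPure R p) : IsFPure L p := by
  obtain ⟨ψ1, hψ1⟩ := hpure
  refine ⟨locHom Q 1 ψ1, ?_⟩
  have : (toTwist L p (1 : L) 1) = toTwist L p (f 1) 1 := by rw [map_one]
  rw [this, locHom_apply, hψ1, map_one]

end Loc
/-- For an F-finite reduced F-pure local ring `R` with splitting prime
ideal `I` and any prime `Q ⊇ I`, the splitting prime of `R_Q` is `I R_Q`. -/
theorem splittingPrime_localization
    (R : Type*) [CommRing R] [IsNoetherianRing R] [IsLocalRing R] [IsReduced R]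
    (p : ℕ) [Fact p.Prime] [CharP R p] (hFF : IsFFinite R p)
    (hpure : IsFPure R p)
    (I : Ideal R) (hI : (I : Set R) = SplittingPrimeSet R p)
    (Q : Ideal R) [Q.IsPrime] (hQ : I ≤ Q)
    [CharP (Localization.AtPrime Q) p] :
    SplittingPrimeSet (Localization.AtPrime Q) p =
      ↑(I.map (algebraMap R (Localization.AtPrime Q))) := by
  set L := Localization.AtPrime Q with hL
  let f := algebraMap R L
  have hpureL : IsFPure L p := isFPure_localization Q hpure
  -- Direction `I R_Q ⊆ 𝒫(R_Q)`.
  have key : ∀ c ∈ I, f c ∈ SplittingPrimeSet L p := by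
    intro c hc
    by_contra hx
    obtain ⟨e, Ψ, hΨ⟩ := (not_mem_splittingPrimeSet_iff hpureL _).mp hx
    haveI : Module.Finite R (Twist R p R e) := finite_twist hFF e
    haveI : Module.FinitePresentation R (Twist R p R e) :=
      Module.finitePresentation_of_finite _ _
    let θ : Twist R p R e →ₗ[R] L :=
      { toFun := fun m => Ψ (toTwist L p (f (show R from m)) e)
        map_add' := fun a b => by
          show Ψ (toTwist L p (f ((show R from a) + (show R from b))) e) = _ + _
          rw [map_add, twistHom_add]
        map_smul' := fun r m => by
          show Ψ (toTwist L p (f (r ^ p ^ e * (show R from m))) e)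
            = r • Ψ (toTwist L p (f (show R from m)) e)
          rw [map_mul, map_pow, twistHom_mul_pow, Algebra.smul_def] }
    obtain ⟨φ, s, hfs⟩ := Module.FinitePresentation.exists_lift_of_isLocalizedModule
      Q.primeCompl (Algebra.linearMap R L) θ
    have h1 := LinearMap.congr_fun hfs (toTwist R p c e)
    have h2 : f (φ (toTwist R p c e)) = f (s : R) := by
      calc f (φ (toTwist R p c e)) = (Algebra.linearMap R L ∘ₗ φ) (toTwist R p c e) := rfl
        _ = (s • θ) (toTwist R p c e) := h1
        _ = (s : R) • θ (toTwist R p c e) := rfl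
        _ = f (s : R) * Ψ (toTwist L p (f c) e) := by rw [Algebra.smul_def]; rfl
        _ = f (s : R) := by rw [hΨ, mul_one]
    obtain ⟨t, ht⟩ := (IsLocalization.eq_iff_exists Q.primeCompl L).mp h2
    have hmem : ((t : R) • φ) (toTwist R p c e) ∈ SplittingPrimeSet R p := by
      refine splittingPrime_compatible hpure ?_ e _
      rw [← hI]; exact hc
    have hmem2 : (t : R) * φ (toTwist R p c e) ∈ SplittingPrimeSet R p := hmem
    rw [← hI] at hmem2
    have hQmem : (t : R) * (s : R) ∈ Q := hQ (by rw [← ht]; exact hmem2)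
    exact (mul_mem t.2 s.2 : (t : R) * (s : R) ∈ Q.primeCompl) hQmem
  -- Direction `𝒫(R_Q) ⊆ I R_Q`.
  have sub1 : ∀ x : L, x ∈ SplittingPrimeSet L p → x ∈ I.map f := by
    intro x hx
    by_contra hnx
    obtain ⟨⟨r, s⟩, hrs⟩ := IsLocalization.surj (M := Q.primeCompl) x
    have hr : r ∉ I := by
      intro hrI
      apply hnx
      have hu : IsUnit (f (s : R)) := IsLocalization.map_units L s
      have hxe : x = f r * (↑hu.unit⁻¹ : L) := by
        calc x = x * (f (s : R) * (↑hu.unit⁻¹ : L)) := by rw [hu.mul_val_inv, mul_one]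
          _ = (x * f (s : R)) * (↑hu.unit⁻¹ : L) := by ring
          _ = f r * (↑hu.unit⁻¹ : L) := by rw [hrs]
      rw [hxe]
      exact Ideal.mul_mem_right _ _ (Ideal.mem_map_of_mem _ hrI)
    have hrP : r ∉ SplittingPrimeSet R p := by rw [← hI]; exact hr
    obtain ⟨e, φ, hφ⟩ := (not_mem_splittingPrimeSet_iff hpure r).mp hrP
    have hsplit : SplitsFrob L p x e := by
      refine ⟨mkTwistHom e (fun m => locHom Q e φ (toTwist L p (f (s : R) * m) e)) ?_ ?_, ?_⟩
      · intro a b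
        show locHom Q e φ (toTwist L p (f (s : R) * (a + b)) e) = _ + _
        rw [mul_add, twistHom_add]
      · intro l m
        show locHom Q e φ (toTwist L p (f (s : R) * (l ^ p ^ e * m)) e)
          = l * locHom Q e φ (toTwist L p (f (s : R) * m) e)
        rw [show f (s : R) * (l ^ p ^ e * m) = l ^ p ^ e * (f (s : R) * m) by ring,
          twistHom_mul_pow]
      · rw [mkTwistHom_apply]
        have hfx : f (s : R) * x = f r := by rw [mul_comm]; exact hrs
        rw [hfx, locHom_apply, hφ, map_one]
    exact (not_mem_splittingPrimeSet_iff hpureL x).mpr ⟨e, hsplit⟩ hx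
  ext x
  constructor
  · exact sub1 x
  · intro hx
    have hle : I.map f ≤ splittingIdeal L p :=
      Ideal.map_le_iff_le_comap.mpr (fun c hc => key c hc)
    exact hle hx
end
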